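/- Let X be a transitive subshift with exactly two minimal subsystems, of which i > 0 are infinite. Then liminf_{n→∞} (c_X(n) − (i+1)n) > −∞. -/

import Mathlib

open Filter Topology MeasureTheory

variable {A : Type*} {B : Type*}

/-- The shift by `m` on bi-infinite sequences. -/
def shiftBy (m : ℤ) (x : ℤ → A) : ℤ → A := fun i => x (i + m)

/-- The orbit closure of a point. -/
def orbitClosure [TopologicalSpace A] (x : ℤ → A) : Set (ℤ → A) :=
  closure {y | ∃ m : ℤ, y = shiftBy m x}

/-- A set of sequences invariant under all shifts. -/
def ShiftInvariant (X : Set (ℤ → A)) : Prop := ∀ m : ℤ, ∀ y ∈ X, shiftBy m y ∈ X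

/-- A subshift: closed and shift-invariant. -/
def IsSubshift [TopologicalSpace A] (X : Set (ℤ → A)) : Prop :=
  IsClosed X ∧ ShiftInvariant X

/-- The word `w` occurs in `x` at position `i`. -/
def occursAt (x : ℤ → A) (w : List A) (i : ℤ) : Prop :=
  ∀ k : Fin w.length, x (i + (k.val : ℤ)) = w.get k

/-- The word `w` occurs somewhere in some point of `X`. -/
def WordIn (X : Set (ℤ → A)) (w : List A) : Prop :=
  ∃ x ∈ X, ∃ i : ℤ, occursAt x w i

/-- The language of `X` in length `n`. -/
def langOf (X : Set (ℤ → A)) (n : ℕ) : Set (List A) :=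
  {w | w.length = n ∧ WordIn X w}

/-- The complexity function of `X`. -/
noncomputable def complexity (X : Set (ℤ → A)) (n : ℕ) : ℕ := (langOf X n).ncard

/-- `w` is right-special in `X`. -/
def RightSpecial (X : Set (ℤ → A)) (w : List A) : Prop :=
  ∃ a b : A, a ≠ b ∧ WordIn X (w ++ [a]) ∧ WordIn X (w ++ [b])

/-- `w` is left-special in `X`. -/
def LeftSpecial (X : Set (ℤ → A)) (w : List A) : Prop :=
  ∃ a b : A, a ≠ b ∧ WordIn X (a :: w) ∧ WordIn X (b :: w)

/-- The set of right-special words of length `n`. -/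
def RS (X : Set (ℤ → A)) (n : ℕ) : Set (List A) :=
  {w | w.length = n ∧ RightSpecial X w}

/-- The length-`ℓ` word of `x` starting at position `i`. -/
def wordAt (x : ℤ → A) (i : ℤ) (ℓ : ℕ) : List A :=
  List.ofFn (fun t : Fin ℓ => x (i + (t.val : ℤ)))

/-- `x` is a recurrent point: every word in it occurs infinitely often. -/
def RecurrentPt (x : ℤ → A) : Prop :=
  ∀ n : ℕ, ∀ i N : ℤ, ∃ j : ℤ, N ≤ j ∧ ∀ k : ℕ, k < n → x (j + k) = x (i + k)

/-- `x` is eventually periodic to the right. -/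
def EventuallyPeriodicRight (x : ℤ → A) : Prop :=
  ∃ p : ℤ, 0 < p ∧ ∃ N : ℤ, ∀ i : ℤ, N < i → x (i + p) = x i

/-- `x` is eventually periodic to the left. -/
def EventuallyPeriodicLeft (x : ℤ → A) : Prop :=
  ∃ p : ℤ, 0 < p ∧ ∃ N : ℤ, ∀ i : ℤ, i < N → x (i - p) = x i

/-- `M` is a minimal subsystem of `X`. -/
def MinimalSubsystem [TopologicalSpace A] (X M : Set (ℤ → A)) : Prop :=
  M ⊆ X ∧ M.Nonempty ∧ IsClosed M ∧ ShiftInvariant M ∧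
    ∀ M' ⊆ M, M'.Nonempty → IsClosed M' → ShiftInvariant M' → M' = M

/-- `x` is a generic point for the measure `μ`. -/
def GenericFor [TopologicalSpace A] [MeasurableSpace A] (x : ℤ → A)
    (μ : Measure (ℤ → A)) : Prop :=
  ∀ f : (ℤ → A) → ℝ, Continuous f →
    Tendsto (fun N : ℕ => (∑ i ∈ Finset.range N, f (shiftBy i x)) / (N : ℝ)) atTop
      (𝓝 (∫ y, f y ∂μ))

/-- `μ` is a generic measure for `X`. -/
def GenericMeasure [TopologicalSpace A] [MeasurableSpace A] (X : Set (ℤ → A))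
    (μ : Measure (ℤ → A)) : Prop :=
  ∃ x ∈ X, GenericFor x μ

/-!
Put `X = orbitClosure x`. Since `c_X(n+1) = ∑ r(w)` over the length-`n` words `w`, where `r(w)` is
the number of right extensions of `w`, the increment `c_X(n+1) - c_X(n)` is the total excess
`∑ (r(w) - 1)`. For large `n` distinct minimal subsystems have disjoint languages, and an infinite
minimal subsystem has a right-special word of every length (Morse–Hedlund), which contributes one
to the excess. One more unit comes from transitivity: if every minimal subsystem kept all of its
`X`-extensions of length-`n` words, then sliding a window along `x` from an occurrence of a word
of one minimal subsystem would stay inside its language forever, and never reach the words of the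
other one, which also occur in `x`. Thus `c_X(n+1) - c_X(n) ≥ i + 1` eventually.
-/

@[simp] lemma length_wordAt (x : ℤ → A) (a : ℤ) (ℓ : ℕ) : (wordAt x a ℓ).length = ℓ := by
  simp [wordAt]

lemma wordAt_eq_wordAt_iff {x y : ℤ → A} {a b : ℤ} {ℓ : ℕ} :
    wordAt x a ℓ = wordAt y b ℓ ↔ ∀ k < ℓ, x (a + k) = y (b + k) := by
  simp [wordAt, List.ofFn_inj, funext_iff, Fin.forall_iff]

lemma wordAt_succ (x : ℤ → A) (a : ℤ) (ℓ : ℕ) :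
    wordAt x a (ℓ + 1) = wordAt x a ℓ ++ [x (a + ℓ)] := by
  simp only [wordAt, List.ofFn_succ', List.concat_eq_append, Fin.val_castSucc, Fin.val_last]

lemma wordAt_shiftBy (m : ℤ) (x : ℤ → A) (a : ℤ) (ℓ : ℕ) :
    wordAt (shiftBy m x) a ℓ = wordAt x (a + m) ℓ :=
  wordAt_eq_wordAt_iff.2 fun k _ => by simp only [shiftBy]; ring_nf

@[simp] lemma shiftBy_zero (x : ℤ → A) : shiftBy 0 x = x := by
  funext t
  simp [shiftBy]

lemma shiftBy_shiftBy (m m' : ℤ) (x : ℤ → A) :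
    shiftBy m' (shiftBy m x) = shiftBy (m + m') x := by
  funext t
  simp only [shiftBy]
  ring_nf

lemma occursAt_iff_wordAt_eq {x : ℤ → A} {w : List A} {i : ℤ} :
    occursAt x w i ↔ wordAt x i w.length = w := by
  simp [occursAt, wordAt, List.ext_get_iff, Fin.forall_iff]

lemma wordIn_iff {X : Set (ℤ → A)} {w : List A} :
    WordIn X w ↔ ∃ x ∈ X, ∃ i, wordAt x i w.length = w := by
  simp only [WordIn, occursAt_iff_wordAt_eq]

lemma wordIn_wordAt {X : Set (ℤ → A)} {x : ℤ → A} (hx : x ∈ X) (i : ℤ) (ℓ : ℕ) :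
    WordIn X (wordAt x i ℓ) :=
  wordIn_iff.2 ⟨x, hx, i, by rw [length_wordAt]⟩

lemma WordIn.mono {X Y : Set (ℤ → A)} (hXY : X ⊆ Y) {w : List A} (hw : WordIn X w) :
    WordIn Y w :=
  let ⟨x, hx, hocc⟩ := hw
  ⟨x, hXY hx, hocc⟩

lemma WordIn.exists_snoc {X : Set (ℤ → A)} {w : List A} (hw : WordIn X w) :
    ∃ a, WordIn X (w ++ [a]) := by
  obtain ⟨x, hx, i, hi⟩ := wordIn_iff.1 hw
  refine ⟨x (i + w.length), ?_⟩
  have := wordIn_wordAt hx i (w.length + 1)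
  rwa [wordAt_succ, hi] at this

lemma WordIn.of_snoc {X : Set (ℤ → A)} {w : List A} {a : A} (h : WordIn X (w ++ [a])) :
    WordIn X w := by
  obtain ⟨x, hx, i, hi⟩ := wordIn_iff.1 h
  rw [List.length_append, List.length_singleton, wordAt_succ] at hi
  exact wordIn_iff.2 ⟨x, hx, i, (List.append_inj hi (length_wordAt _ _ _)).1⟩

lemma WordIn.wordAt_of_le {X : Set (ℤ → A)} {z : ℤ → A} {a b : ℤ} {L ℓ : ℕ}
    (h : WordIn X (wordAt z a L)) (hab : a ≤ b) (hbL : b + ℓ ≤ a + L) :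
    WordIn X (wordAt z b ℓ) := by
  obtain ⟨x, hx, i, hi⟩ := wordIn_iff.1 h
  rw [length_wordAt, wordAt_eq_wordAt_iff] at hi
  refine wordIn_iff.2 ⟨x, hx, i + (b - a), ?_⟩
  rw [length_wordAt, wordAt_eq_wordAt_iff]
  intro k hk
  have := hi ((b - a).toNat + k) (by omega)
  rw [Nat.cast_add, Int.toNat_of_nonneg (by omega)] at this
  convert this using 2 <;> ring

lemma isClopen_setOf_wordAt_mem [TopologicalSpace A] [DiscreteTopology A] (a : ℤ) (ℓ : ℕ)
    (S : Set (List A)) :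
    IsClopen {z : ℤ → A | wordAt z a ℓ ∈ S} :=
  (isClopen_discrete (List.ofFn ⁻¹' S)).preimage
    (f := fun z : ℤ → A => fun t : Fin ℓ => z (a + t)) (by fun_prop)

lemma exists_wordAt_eq_of_wordIn_orbitClosure [TopologicalSpace A] [DiscreteTopology A]
    {x : ℤ → A} {w : List A} (h : WordIn (orbitClosure x) w) : ∃ j, wordAt x j w.length = w := by
  obtain ⟨y, hy, i, hi⟩ := wordIn_iff.1 h
  obtain ⟨z, hz, m, rfl⟩ :=
    mem_closure_iff.1 hy _ (isClopen_setOf_wordAt_mem i w.length {w}).isOpen hi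
  exact ⟨i + m, by rw [← wordAt_shiftBy]; exact hz⟩

lemma mem_of_forall_wordIn [TopologicalSpace A] {M : Set (ℤ → A)} (hcl : IsClosed M)
    (hinv : ShiftInvariant M) {y : ℤ → A} (h : ∀ k : ℕ, WordIn M (wordAt y (-k) (2 * k + 1))) :
    y ∈ M := by
  have hz : ∀ k : ℕ, ∃ z ∈ M, wordAt z (-k) (2 * k + 1) = wordAt y (-k) (2 * k + 1) := by
    intro k
    obtain ⟨m, hm, j, hj⟩ := wordIn_iff.1 (h k)
    refine ⟨shiftBy (j + k) m, hinv _ _ hm, ?_⟩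
    rw [wordAt_shiftBy, ← hj, length_wordAt, show -(k : ℤ) + (j + k) = j by ring]
  choose z hzM hzy using hz
  refine hcl.mem_of_tendsto (b := atTop) (tendsto_pi_nhds.2 fun t => ?_)
    (Eventually.of_forall hzM)
  refine tendsto_const_nhds.congr' ?_
  filter_upwards [eventually_ge_atTop t.natAbs] with k hk
  have := wordAt_eq_wordAt_iff.1 (hzy k) (t + k).toNat (by omega)
  rwa [show -(k : ℤ) + (t + k).toNat = t by omega, eq_comm] at this

namespace MinimalSubsystem

variable [TopologicalSpace A] {X Y M M₁ M₂ : Set (ℤ → A)}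

lemma eq_of_inter_nonempty (h₁ : MinimalSubsystem X M₁) (h₂ : MinimalSubsystem Y M₂)
    (hne : (M₁ ∩ M₂).Nonempty) : M₁ = M₂ := by
  have hcl : IsClosed (M₁ ∩ M₂) := h₁.2.2.1.inter h₂.2.2.1
  have hinv : ShiftInvariant (M₁ ∩ M₂) := fun m y hy =>
    ⟨h₁.2.2.2.1 m y hy.1, h₂.2.2.2.1 m y hy.2⟩
  exact (h₁.2.2.2.2 _ Set.inter_subset_left hne hcl hinv).symm.trans
    (h₂.2.2.2.2 _ Set.inter_subset_right hne hcl hinv)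

/-- Otherwise, by compactness, the nested closed sets of points of `M₁` whose central windows are
words of `M₂` have a common point, and it lies in `M₁ ∩ M₂`. -/
lemma eventually_disjoint_langOf [Finite A] [DiscreteTopology A] (h₁ : MinimalSubsystem X M₁)
    (h₂ : MinimalSubsystem Y M₂) (hne : M₁ ≠ M₂) :
    ∀ᶠ n in atTop, Disjoint (langOf M₁ n) (langOf M₂ n) := by
  by_contra hcon
  rw [not_eventually, frequently_atTop] at hcon
  set K : ℕ → Set (ℤ → A) := fun k =>
    M₁ ∩ {z | wordAt z (-k) (2 * k + 1) ∈ {w | WordIn M₂ w}}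
  have hK_anti : ∀ k, K (k + 1) ⊆ K k := fun k z ⟨hz, hw⟩ =>
    ⟨hz, WordIn.wordAt_of_le hw (by omega) (by push_cast; omega)⟩
  have hK_ne : ∀ k, (K k).Nonempty := by
    intro k
    obtain ⟨n, hn, hnd⟩ := hcon (2 * k + 1)
    obtain ⟨u, ⟨hu, hu₁⟩, -, hu₂⟩ := Set.not_disjoint_iff.1 hnd
    obtain ⟨m, hm, j, hj⟩ := wordIn_iff.1 hu₁
    refine ⟨shiftBy (j + k) m, h₁.2.2.2.1 _ _ hm, ?_⟩
    rw [← hj] at hu₂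
    show WordIn M₂ _
    rw [wordAt_shiftBy, show -(k : ℤ) + (j + k) = j by ring]
    exact hu₂.wordAt_of_le le_rfl (by omega)
  have hK_cl : ∀ k, IsClosed (K k) := fun k =>
    h₁.2.2.1.inter (isClopen_setOf_wordAt_mem _ _ _).isClosed
  obtain ⟨y, hy⟩ := IsCompact.nonempty_iInter_of_sequence_nonempty_isCompact_isClosed K hK_anti
    hK_ne (hK_cl 0).isCompact hK_cl
  rw [Set.mem_iInter] at hy
  have hy₂ : y ∈ M₂ := mem_of_forall_wordIn h₂.2.2.1 h₂.2.2.2.1 fun k => (hy k).2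
  exact hne (h₁.eq_of_inter_nonempty h₂ ⟨y, (hy 0).1, hy₂⟩)

end MinimalSubsystem

lemma eventuallyPeriodicRight_of_wordAt_determines [Finite A] {z : ℤ → A} {n : ℕ}
    (hdet : ∀ s s', wordAt z s n = wordAt z s' n → z (s + n) = z (s' + n)) :
    EventuallyPeriodicRight z := by
  obtain ⟨j₁, j₂, hne, hj⟩ :=
    Finite.exists_ne_map_eq_of_infinite fun j : ℕ => fun t : Fin n => z (j + t)
  wlog hlt : j₁ < j₂ generalizing j₁ j₂
  · exact this j₂ j₁ hne.symm hj.symm (by omega)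
  have hagree : ∀ d : ℕ, z (j₁ + d) = z (j₂ + d) := by
    intro d
    induction d using Nat.strong_induction_on with
    | _ d ih =>
      rcases lt_or_ge d n with hd | hd
      · exact congrFun hj ⟨d, hd⟩
      · have hwin : wordAt z (j₁ + (d - n : ℕ)) n = wordAt z (j₂ + (d - n : ℕ)) n :=
          wordAt_eq_wordAt_iff.2 fun k hk => by
            have := ih (d - n + k) (by omega)
            push_cast at this
            rwa [add_assoc, add_assoc]
        have := hdet _ _ hwin
        rwa [add_assoc, add_assoc, ← Nat.cast_add, Nat.sub_add_cancel hd] at this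
  refine ⟨j₂ - j₁, by omega, j₁, fun s hs => ?_⟩
  have := hagree (s - j₁).toNat
  rw [Int.toNat_of_nonneg (by omega)] at this
  convert this.symm using 2 <;> ring

namespace MinimalSubsystem

variable [TopologicalSpace A] [DiscreteTopology A] {X M : Set (ℤ → A)}

/-- The periodic point `t ↦ z (N + 1 + t % p)` lies in `M`, and its orbit is finite, closed and
invariant, hence all of `M`. -/
lemma finite_of_eventuallyPeriodicRight (hM : MinimalSubsystem X M) {z : ℤ → A} (hz : z ∈ M)
    (hper : EventuallyPeriodicRight z) : M.Finite := by
  obtain ⟨p, hp, N, hN⟩ := hper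
  have hmul : ∀ k : ℕ, ∀ s, N < s → z (s + k * p) = z s := by
    intro k
    induction k with
    | zero => simp
    | succ k ih =>
      intro s hs
      have hkp : 0 ≤ (k : ℤ) * p := mul_nonneg (Nat.cast_nonneg k) hp.le
      rw [Nat.cast_succ, add_one_mul, ← add_assoc, hN _ (by linarith), ih s hs]
  have hmod : ∀ c : ℤ, 0 ≤ c → z (N + 1 + c % p) = z (N + 1 + c) := by
    intro c hc
    have := hmul (c / p).toNat (N + 1 + c % p) (by have := Int.emod_nonneg c hp.ne'; omega)
    rw [Int.toNat_of_nonneg (Int.ediv_nonneg hc hp.le), add_assoc,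
      Int.emod_add_ediv_mul] at this
    exact this.symm
  set y : ℤ → A := fun t => z (N + 1 + t % p)
  have hyM : y ∈ M := by
    refine mem_of_forall_wordIn hM.2.2.1 hM.2.2.2.1 fun k => ?_
    have hwin : wordAt y (-k) (2 * k + 1) = wordAt z (N + 1 + (-k) % p) (2 * k + 1) := by
      refine wordAt_eq_wordAt_iff.2 fun t _ => ?_
      simp only [y]
      rw [← Int.emod_add_emod, hmod _ (by have := Int.emod_nonneg (-(k : ℤ)) hp.ne'; omega),
        ← add_assoc]
    rw [hwin]
    exact wordIn_wordAt hz _ _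
  have hshift : ∀ m, shiftBy m y = shiftBy (m % p) y := fun m => by
    funext t
    simp only [shiftBy, y, Int.add_emod_emod]
  have horbit_fin : (Set.range fun m => shiftBy m y).Finite := by
    refine ((Set.finite_Ico 0 p).image fun r => shiftBy r y).subset ?_
    rintro _ ⟨m, rfl⟩
    exact ⟨m % p, ⟨Int.emod_nonneg m hp.ne', Int.emod_lt_of_pos m hp⟩, (hshift m).symm⟩
  have horbit : (Set.range fun m => shiftBy m y) = M := by
    refine hM.2.2.2.2 _ ?_ ⟨y, 0, shiftBy_zero y⟩ horbit_fin.isClosed ?_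
    · rintro _ ⟨m, rfl⟩
      exact hM.2.2.2.1 m y hyM
    · rintro m' _ ⟨m, rfl⟩
      exact ⟨m + m', (shiftBy_shiftBy m m' y).symm⟩
  exact horbit ▸ horbit_fin

lemma rs_nonempty_of_infinite [Finite A] (hM : MinimalSubsystem X M) (hinf : M.Infinite) (n : ℕ) :
    (RS M n).Nonempty := by
  by_contra hRS
  obtain ⟨z, hz⟩ := hM.2.1
  refine hinf (hM.finite_of_eventuallyPeriodicRight hz
    (eventuallyPeriodicRight_of_wordAt_determines (n := n) fun s s' hss' => ?_))
  by_contra hne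
  refine hRS ⟨wordAt z s n, length_wordAt z s n, z (s + n), z (s' + n), hne, ?_, ?_⟩
  · rw [← wordAt_succ]
    exact wordIn_wordAt hz s (n + 1)
  · rw [hss', ← wordAt_succ]
    exact wordIn_wordAt hz s' (n + 1)

end MinimalSubsystem

section Counting

lemma langOf_finite [Finite A] (X : Set (ℤ → A)) (n : ℕ) : (langOf X n).Finite :=
  (List.finite_length_eq A n).subset fun _ hw => hw.1

noncomputable def langFinset [Finite A] (X : Set (ℤ → A)) (n : ℕ) : Finset (List A) :=
  (langOf_finite X n).toFinset

@[simp] lemma mem_langFinset [Finite A] {X : Set (ℤ → A)} {n : ℕ} {w : List A} :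
    w ∈ langFinset X n ↔ w.length = n ∧ WordIn X w := by
  simp [langFinset, langOf]

lemma complexity_eq_card_langFinset [Finite A] (X : Set (ℤ → A)) (n : ℕ) :
    complexity X n = (langFinset X n).card :=
  Set.ncard_eq_toFinset_card _ _

lemma langFinset_mono [Finite A] {M X : Set (ℤ → A)} (h : M ⊆ X) (n : ℕ) :
    langFinset M n ⊆ langFinset X n := fun _ hw => by
  rw [mem_langFinset] at hw ⊢
  exact ⟨hw.1, hw.2.mono h⟩

def RightExtensionClosed (X M : Set (ℤ → A)) (n : ℕ) : Prop :=
  ∀ w a, w.length = n → WordIn M w → WordIn X (w ++ [a]) → WordIn M (w ++ [a])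

open Classical in
noncomputable def rightExtensions [Fintype A] (X : Set (ℤ → A)) (w : List A) : Finset A :=
  Finset.univ.filter fun a => WordIn X (w ++ [a])

variable [Fintype A] {M X : Set (ℤ → A)} {n : ℕ}

@[simp] lemma mem_rightExtensions {w : List A} {a : A} :
    a ∈ rightExtensions X w ↔ WordIn X (w ++ [a]) := by
  simp [rightExtensions]

lemma rightExtensions_mono (h : M ⊆ X) (w : List A) :
    rightExtensions M w ⊆ rightExtensions X w := fun _ ha => by
  rw [mem_rightExtensions] at ha ⊢
  exact ha.mono h

lemma sum_card_rightExtensions_le_complexity (X : Set (ℤ → A)) (n : ℕ) :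
    ∑ w ∈ langFinset X n, (rightExtensions X w).card ≤ complexity X (n + 1) := by
  rw [← Finset.card_sigma, complexity_eq_card_langFinset]
  refine Finset.card_le_card_of_injOn (fun p => p.1 ++ [p.2]) ?_ ?_
  · rintro ⟨w, a⟩ h
    simp only [Finset.coe_sigma, Set.mem_sigma_iff, Finset.mem_coe, mem_langFinset,
      mem_rightExtensions] at h
    simp [h.1.1, h.2]
  · rintro ⟨w, a⟩ h ⟨w', a'⟩ h' heq
    simp only [Finset.coe_sigma, Set.mem_sigma_iff, Finset.mem_coe, mem_langFinset] at h h'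
    obtain ⟨rfl, ha⟩ := List.append_inj heq (h.1.1.trans h'.1.1.symm)
    simp only [List.cons.injEq, and_true] at ha
    rw [ha]

lemma sum_card_rightExtensions_le_of_subset (h : M ⊆ X) (U : Finset (List A)) :
    ∑ w ∈ U, (rightExtensions M w).card ≤ ∑ w ∈ U, (rightExtensions X w).card :=
  Finset.sum_le_sum fun w _ => Finset.card_le_card (rightExtensions_mono h w)

lemma card_le_sum_card_rightExtensions {U : Finset (List A)} (hU : U ⊆ langFinset X n) :
    U.card ≤ ∑ w ∈ U, (rightExtensions X w).card := by
  rw [Finset.card_eq_sum_ones]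
  refine Finset.sum_le_sum fun w hw => Finset.card_pos.2 ?_
  obtain ⟨a, ha⟩ := (mem_langFinset.1 (hU hw)).2.exists_snoc
  exact ⟨a, mem_rightExtensions.2 ha⟩

lemma card_lt_sum_card_rightExtensions (hRS : (RS X n).Nonempty) :
    (langFinset X n).card < ∑ w ∈ langFinset X n, (rightExtensions X w).card := by
  obtain ⟨s, hs, a, b, hab, ha, hb⟩ := hRS
  rw [Finset.card_eq_sum_ones]
  refine Finset.sum_lt_sum (fun w hw => ?_) ⟨s, mem_langFinset.2 ⟨hs, ha.of_snoc⟩, ?_⟩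
  · simpa using card_le_sum_card_rightExtensions (Finset.singleton_subset_iff.2 hw)
  · exact Finset.one_lt_card.2 ⟨a, mem_rightExtensions.2 ha, b, mem_rightExtensions.2 hb, hab⟩

lemma complexity_add_sum_le {U : Finset (List A)} (hU : U ⊆ langFinset X n) :
    complexity X n + ∑ w ∈ U, (rightExtensions X w).card ≤ complexity X (n + 1) + U.card := by
  classical
  have hall := sum_card_rightExtensions_le_complexity X n
  rw [← Finset.sum_sdiff hU] at hall
  have hrest :=
    card_le_sum_card_rightExtensions (Finset.sdiff_subset (s := langFinset X n) (t := U))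
  have hcard := Finset.card_sdiff_add_card_eq_card hU
  rw [complexity_eq_card_langFinset]
  omega

lemma sum_card_rightExtensions_lt (h : M ⊆ X)
    (hM : ¬ RightExtensionClosed X M n) :
    ∑ w ∈ langFinset M n, (rightExtensions M w).card <
      ∑ w ∈ langFinset M n, (rightExtensions X w).card := by
  simp only [RightExtensionClosed, not_forall] at hM
  obtain ⟨w, a, hw, hwM, haX, haM⟩ := hM
  refine Finset.sum_lt_sum (fun w _ => Finset.card_le_card (rightExtensions_mono h w))
    ⟨w, mem_langFinset.2 ⟨hw, hwM⟩, Finset.card_lt_card ?_⟩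
  exact (Finset.ssubset_iff_of_subset (rightExtensions_mono h w)).2
    ⟨a, mem_rightExtensions.2 haX, mt mem_rightExtensions.1 haM⟩

end Counting

lemma RightExtensionClosed.wordIn_wordAt_add {X M : Set (ℤ → A)} {n : ℕ}
    (h : RightExtensionClosed X M n) {z : ℤ → A} (hz : z ∈ X) {t : ℤ}
    (ht : WordIn M (wordAt z t n)) (d : ℕ) : WordIn M (wordAt z (t + d) n) := by
  induction d with
  | zero => simpa using ht
  | succ d ih =>
    have hX := wordIn_wordAt hz (t + d) (n + 1)
    rw [wordAt_succ] at hX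
    have hM := h _ _ (length_wordAt _ _ _) ih hX
    rw [← wordAt_succ] at hM
    rw [Nat.cast_succ, ← add_assoc]
    exact hM.wordAt_of_le (by omega) (by omega)

lemma exists_wordIn_wordAt_of_subset_orbitClosure [TopologicalSpace A] [DiscreteTopology A]
    {x : ℤ → A} {M : Set (ℤ → A)} (hM : M ⊆ orbitClosure x) (hne : M.Nonempty) (n : ℕ) :
    ∃ j, WordIn M (wordAt x j n) := by
  obtain ⟨m, hm⟩ := hne
  obtain ⟨j, hj⟩ := exists_wordAt_eq_of_wordIn_orbitClosure ((wordIn_wordAt hm 0 n).mono hM)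
  rw [length_wordAt] at hj
  exact ⟨j, hj ▸ wordIn_wordAt hm 0 n⟩

lemma not_rightExtensionClosed_or [TopologicalSpace A] [DiscreteTopology A] {x : ℤ → A}
    {M₁ M₂ : Set (ℤ → A)} {n : ℕ} (h₁ : M₁ ⊆ orbitClosure x) (h₂ : M₂ ⊆ orbitClosure x)
    (hne₁ : M₁.Nonempty) (hne₂ : M₂.Nonempty) (hdisj : Disjoint (langOf M₁ n) (langOf M₂ n)) :
    ¬ RightExtensionClosed (orbitClosure x) M₁ n ∨
      ¬ RightExtensionClosed (orbitClosure x) M₂ n := by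
  have hx : x ∈ orbitClosure x := subset_closure ⟨0, (shiftBy_zero x).symm⟩
  have hsep : ∀ j, WordIn M₁ (wordAt x j n) → WordIn M₂ (wordAt x j n) → False :=
    fun j hj₁ hj₂ => Set.disjoint_left.1 hdisj ⟨length_wordAt x j n, hj₁⟩ ⟨length_wordAt x j n, hj₂⟩
  obtain ⟨j₁, hj₁⟩ := exists_wordIn_wordAt_of_subset_orbitClosure h₁ hne₁ n
  obtain ⟨j₂, hj₂⟩ := exists_wordIn_wordAt_of_subset_orbitClosure h₂ hne₂ n
  by_contra! hc
  rcases le_total j₁ j₂ with hj | hj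
  · have := hc.1.wordIn_wordAt_add hx hj₁ (j₂ - j₁).toNat
    rw [Int.toNat_of_nonneg (by omega), add_sub_cancel] at this
    exact hsep j₂ this hj₂
  · have := hc.2.wordIn_wordAt_add hx hj₂ (j₁ - j₂).toNat
    rw [Int.toNat_of_nonneg (by omega), add_sub_cancel] at this
    exact hsep j₁ hj₁ this

open Classical in
theorem eventually_complexity_add_le [Fintype A] [TopologicalSpace A] [DiscreteTopology A]
    {x : ℤ → A} (𝓜 : Finset (Set (ℤ → A)))
    (h𝓜 : ∀ M ∈ 𝓜, MinimalSubsystem (orbitClosure x) M) (h𝓜card : 1 < 𝓜.card) :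
    ∀ᶠ n in atTop, complexity (orbitClosure x) n + ((𝓜.filter Set.Infinite).card + 1) ≤
      complexity (orbitClosure x) (n + 1) := by
  have hdisj : ∀ᶠ n in atTop, ∀ M ∈ 𝓜, ∀ M' ∈ 𝓜, M ≠ M' → Disjoint (langOf M n) (langOf M' n) := by
    simp only [eventually_all_finset, eventually_imp_distrib_left]
    exact fun M hM M' hM' hne => (h𝓜 M hM).eventually_disjoint_langOf (h𝓜 M' hM') hne
  filter_upwards [hdisj] with n hn
  obtain ⟨M₁, hM₁, M₂, hM₂, hne⟩ := Finset.one_lt_card.1 h𝓜card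
  obtain ⟨M₀, hM₀, hopen⟩ : ∃ M₀ ∈ 𝓜, ¬ RightExtensionClosed (orbitClosure x) M₀ n := by
    rcases not_rightExtensionClosed_or (h𝓜 M₁ hM₁).1 (h𝓜 M₂ hM₂).1 (h𝓜 M₁ hM₁).2.1
      (h𝓜 M₂ hM₂).2.1 (hn M₁ hM₁ M₂ hM₂ hne) with h | h
    exacts [⟨M₁, hM₁, h⟩, ⟨M₂, hM₂, h⟩]
  have hbound : ∀ M ∈ 𝓜, (langFinset M n).card + (if M.Infinite then 1 else 0) ≤
      ∑ w ∈ langFinset M n, (rightExtensions M w).card := by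
    intro M hM
    split_ifs with hinf
    · exact card_lt_sum_card_rightExtensions ((h𝓜 M hM).rs_nonempty_of_infinite hinf n)
    · exact card_le_sum_card_rightExtensions subset_rfl
  have hpd : (𝓜 : Set (Set (ℤ → A))).PairwiseDisjoint (langFinset · n) :=
    fun M hM M' hM' hne => by
      simpa only [langFinset, Set.Finite.disjoint_toFinset] using hn M hM M' hM' hne
  have hU : 𝓜.biUnion (langFinset · n) ⊆ langFinset (orbitClosure x) n :=
    Finset.biUnion_subset.2 fun M hM => langFinset_mono (h𝓜 M hM).1 n
  have hcount := complexity_add_sum_le hU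
  rw [Finset.sum_biUnion hpd, Finset.card_biUnion hpd] at hcount
  have hexcess : ∑ M ∈ 𝓜, ((langFinset M n).card + (if M.Infinite then 1 else 0)) <
      ∑ M ∈ 𝓜, ∑ w ∈ langFinset M n, (rightExtensions (orbitClosure x) w).card :=
    Finset.sum_lt_sum
      (fun M hM => (hbound M hM).trans (sum_card_rightExtensions_le_of_subset (h𝓜 M hM).1 _))
      ⟨M₀, hM₀, (hbound M₀ hM₀).trans_lt (sum_card_rightExtensions_lt (h𝓜 M₀ hM₀).1 hopen)⟩
  rw [Finset.sum_add_distrib] at hexcess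
  rw [Finset.card_filter]
  omega

lemma exists_le_sub_mul_of_eventually_add_le {f : ℕ → ℕ} {k : ℕ}
    (h : ∀ᶠ n in atTop, f n + k ≤ f (n + 1)) : ∃ C : ℤ, ∀ᶠ m in atTop, C ≤ (f m : ℤ) - k * m := by
  obtain ⟨N, hN⟩ := eventually_atTop.1 h
  refine ⟨f N - k * N, eventually_atTop.2 ⟨N, fun m hm => ?_⟩⟩
  induction m, hm using Nat.le_induction with
  | base => rfl
  | succ m hm ih =>
    have hstep : (f m : ℤ) + k ≤ f (m + 1) := by exact_mod_cast hN m hm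
    push_cast
    linarith

theorem stmt15_general [Fintype A] [TopologicalSpace A] [DiscreteTopology A]
    (X : Set (ℤ → A)) (htrans : ∃ x : ℤ → A, X = orbitClosure x)
    (i : ℕ)
    (hcard : {M : Set (ℤ → A) | MinimalSubsystem X M}.ncard = 2)
    (hinf : {M : Set (ℤ → A) | MinimalSubsystem X M ∧ M.Infinite}.ncard = i) :
    ∃ C : ℤ, ∀ᶠ m : ℕ in atTop, C ≤ (complexity X m : ℤ) - ((i : ℤ) + 1) * m := by
  classical
  obtain ⟨x, rfl⟩ := htrans
  have hfin : {M | MinimalSubsystem (orbitClosure x) M}.Finite :=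
    Set.finite_of_ncard_pos (by omega)
  have hi : (hfin.toFinset.filter Set.Infinite).card = i := by
    rw [← hinf, ← Set.ncard_coe_finset]
    congr 1
    ext M
    simp
  have hgrowth := eventually_complexity_add_le hfin.toFinset (fun M hM => hfin.mem_toFinset.1 hM)
    (by rw [← Set.ncard_eq_toFinset_card _ hfin, hcard]; norm_num)
  rw [hi] at hgrowth
  simpa using exists_le_sub_mul_of_eventually_add_le hgrowth

theorem stmt15 [Fintype A] [TopologicalSpace A] [DiscreteTopology A]
    (X : Set (ℤ → A)) (htrans : ∃ x : ℤ → A, X = orbitClosure x)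
    (i : ℕ) (hi : 0 < i)
    (hcard : {M : Set (ℤ → A) | MinimalSubsystem X M}.ncard = 2)
    (hinf : {M : Set (ℤ → A) | MinimalSubsystem X M ∧ M.Infinite}.ncard = i) :
    ∃ C : ℤ, ∀ᶠ m : ℕ in atTop, C ≤ (complexity X m : ℤ) - ((i : ℤ) + 1) * m :=
  stmt15_general X htrans i hcard hinf
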